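/- Let α, β be real numbers with α² + β² = 1 and αβ ≠ 0, and let ψ = α·(e₀ ⊗ e₀) + β·(e₁ ⊗ e₁). Then there exist 2×2 complex Hermitian matrices B₀, B₁ with B₀² = B₁² = I such that ⟨ψ, (σz ⊗ B₀ + σz ⊗ B₁ + σx ⊗ B₀ − σx ⊗ B₁) ψ⟩ > 2. In other words, every state of the form α|00⟩ + β|11⟩ with α, β both nonzero violates the CHSH inequality. -/

import Mathlib

/-!
Take Bob's observables `B₀, B₁ = c σz ± s σx` with `c² + s² = 1`. The CHSH operator then collapses
to `2c σz⊗σz + 2s σx⊗σx`, whose expectation in `α|00⟩ + β|11⟩` is `2c + 4αβ s`. On the unit circle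
this is maximised at `(c, s) ∝ (1, 2αβ)`, with value `2√(1 + 4α²β²)`, which exceeds `2` as soon as
`αβ ≠ 0`.
-/

open Matrix Kronecker

noncomputable def sigmaZ : Matrix (Fin 2) (Fin 2) ℂ := !![1, 0; 0, -1]

noncomputable def sigmaX : Matrix (Fin 2) (Fin 2) ℂ := !![0, 1; 1, 0]

noncomputable def e0 : Fin 2 → ℂ := ![1, 0]

noncomputable def e1 : Fin 2 → ℂ := ![0, 1]

noncomputable def tens (u v : Fin 2 → ℂ) : Fin 2 × Fin 2 → ℂ := fun p => u p.1 * v p.2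

theorem isHermitian_sigmaZ : sigmaZ.IsHermitian := by
  ext i j; fin_cases i <;> fin_cases j <;> simp [sigmaZ]

theorem isHermitian_sigmaX : sigmaX.IsHermitian := by
  ext i j; fin_cases i <;> fin_cases j <;> simp [sigmaX]

theorem sigmaZ_mul_self : sigmaZ * sigmaZ = 1 := by
  ext i j; fin_cases i <;> fin_cases j <;> simp [sigmaZ]

theorem sigmaX_mul_self : sigmaX * sigmaX = 1 := by
  ext i j; fin_cases i <;> fin_cases j <;> simp [sigmaX]

theorem sigmaZ_mul_sigmaX_add_sigmaX_mul_sigmaZ : sigmaZ * sigmaX + sigmaX * sigmaZ = 0 := by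
  ext i j; fin_cases i <;> fin_cases j <;> simp [sigmaZ, sigmaX]

/-- Spin along the direction `(s, c)` of the x–z plane of the Bloch sphere. -/
noncomputable def spinXZ (c s : ℝ) : Matrix (Fin 2) (Fin 2) ℂ := c • sigmaZ + s • sigmaX

theorem isHermitian_spinXZ (c s : ℝ) : (spinXZ c s).IsHermitian :=
  (isHermitian_sigmaZ.smul (.all c)).add (isHermitian_sigmaX.smul (.all s))

theorem spinXZ_mul_self {c s : ℝ} (h : c ^ 2 + s ^ 2 = 1) : spinXZ c s * spinXZ c s = 1 := by
  calc spinXZ c s * spinXZ c s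
      = (c ^ 2) • (sigmaZ * sigmaZ) + (c * s) • (sigmaZ * sigmaX + sigmaX * sigmaZ)
          + (s ^ 2) • (sigmaX * sigmaX) := by
        simp only [spinXZ, add_mul, mul_add, smul_mul_smul_comm, smul_add]
        module
    _ = 1 := by
        rw [sigmaZ_mul_self, sigmaX_mul_self, sigmaZ_mul_sigmaX_add_sigmaX_mul_sigmaZ, smul_zero,
          add_zero, ← add_smul, h, one_smul]

theorem chsh_spinXZ (c s : ℝ) :
    sigmaZ ⊗ₖ spinXZ c s + sigmaZ ⊗ₖ spinXZ c (-s) + sigmaX ⊗ₖ spinXZ c s - sigmaX ⊗ₖ spinXZ c (-s)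
      = (2 * c) • (sigmaZ ⊗ₖ sigmaZ) + (2 * s) • (sigmaX ⊗ₖ sigmaX) := by
  simp only [spinXZ, kronecker_add, kronecker_smul]
  module

noncomputable def schmidtState (α β : ℝ) : Fin 2 × Fin 2 → ℂ :=
  (α : ℂ) • tens e0 e0 + (β : ℂ) • tens e1 e1

theorem schmidtState_expect_sigmaZ_kron_sigmaZ (α β : ℝ) :
    star (schmidtState α β) ⬝ᵥ ((sigmaZ ⊗ₖ sigmaZ) *ᵥ schmidtState α β) =
      ((α ^ 2 + β ^ 2 : ℝ) : ℂ) := by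
  simp [schmidtState, dotProduct, mulVec, Fintype.sum_prod_type, tens, e0, e1, sigmaZ]
  ring

theorem schmidtState_expect_sigmaX_kron_sigmaX (α β : ℝ) :
    star (schmidtState α β) ⬝ᵥ ((sigmaX ⊗ₖ sigmaX) *ᵥ schmidtState α β) =
      ((2 * α * β : ℝ) : ℂ) := by
  simp [schmidtState, dotProduct, mulVec, Fintype.sum_prod_type, tens, e0, e1, sigmaX]
  ring

theorem exists_sq_add_sq_eq_one_one_lt_add_mul {x : ℝ} (hx : x ≠ 0) :
    ∃ c s : ℝ, c ^ 2 + s ^ 2 = 1 ∧ 1 < c + x * s := by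
  have hpos : 0 < 1 + x ^ 2 := by positivity
  set r := √(1 + x ^ 2)
  have hr : r ^ 2 = 1 + x ^ 2 := Real.sq_sqrt hpos.le
  have hr0 : 0 < r := Real.sqrt_pos.mpr hpos
  refine ⟨1 / r, x / r, ?_, ?_⟩
  · field_simp; linarith
  · have : 1 / r + x * (x / r) = r := by field_simp; linarith
    rw [this, Real.lt_sqrt zero_le_one]
    simpa using pow_pos (abs_pos.mpr hx) 2

/-- Every state α|00⟩ + β|11⟩ with α, β real, α² + β² = 1 and αβ ≠ 0 violates the CHSH
inequality: there are ±1-valued qubit observables B₀, B₁ (Hermitian, squaring to the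
identity) such that the CHSH expectation ⟨ψ, (σz⊗B₀ + σz⊗B₁ + σx⊗B₀ − σx⊗B₁)ψ⟩ is a real
number strictly greater than 2. -/
theorem every_pure_entangled_violates_chsh (α β : ℝ)
    (hαβ : α ^ 2 + β ^ 2 = 1) (hne : α * β ≠ 0)
    (ψ : Fin 2 × Fin 2 → ℂ)
    (hψ : ψ = (α : ℂ) • tens e0 e0 + (β : ℂ) • tens e1 e1) :
    ∃ B0 B1 : Matrix (Fin 2) (Fin 2) ℂ,
      B0.IsHermitian ∧ B1.IsHermitian ∧ B0 * B0 = 1 ∧ B1 * B1 = 1 ∧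
      ∃ t : ℝ,
        star ψ ⬝ᵥ ((sigmaZ ⊗ₖ B0 + sigmaZ ⊗ₖ B1 + sigmaX ⊗ₖ B0 - sigmaX ⊗ₖ B1) *ᵥ ψ) =
          (t : ℂ) ∧ 2 < t := by
  obtain ⟨c, s, hcs, hgt⟩ := exists_sq_add_sq_eq_one_one_lt_add_mul (mul_ne_zero two_ne_zero hne)
  refine ⟨spinXZ c s, spinXZ c (-s), isHermitian_spinXZ c s, isHermitian_spinXZ c (-s),
    spinXZ_mul_self hcs, spinXZ_mul_self (by rwa [neg_sq]), 2 * (c + 2 * (α * β) * s), ?_,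
    by linarith⟩
  rw [hψ, ← schmidtState, chsh_spinXZ, add_mulVec, smul_mulVec, smul_mulVec,
    dotProduct_add, dotProduct_smul, dotProduct_smul, schmidtState_expect_sigmaZ_kron_sigmaZ,
    schmidtState_expect_sigmaX_kron_sigmaX, hαβ]
  simp only [Complex.real_smul]
  push_cast
  ring
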